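/- If $f : [0,1]^k \to \mathbb{R}$ has a continuous mixed partial derivative $D f = \partial^k f/\partial x_1\cdots\partial x_k$, then for every box $[\mathbf{x},\mathbf{y}]$ with $\mathbf{x} \le \mathbf{y}$ there exists $\mathbf{c} \in [\mathbf{x},\mathbf{y}]$ such that $\square^k_{\mathbf{x},\mathbf{y}} f = (Df)(\mathbf{c}) \cdot \prod_{i=1}^k (y_i - x_i)$ (a mean value theorem for rectangular increments). -/

import Mathlib

open scoped BigOperators
open MeasureTheory

noncomputable section

/-- The corner of the box `[x,y]` selecting `x i` for `i ∈ S` and `y i` otherwise. -/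
def corner {k : ℕ} (x y : Fin k → ℝ) (S : Finset (Fin k)) : Fin k → ℝ :=
  fun i => if i ∈ S then x i else y i

/-- Rectangular (generalized) increment `□^k_{x,y} f = ∏ (I - V_{i,x}) f(y)`. -/
def boxInc {k : ℕ} (f : (Fin k → ℝ) → ℝ) (x y : Fin k → ℝ) : ℝ :=
  ∑ S : Finset (Fin k), (-1 : ℝ) ^ S.card * f (corner x y S)

/-- Membership in the box `[a,b]`. -/
def inBox {k : ℕ} (a b x : Fin k → ℝ) : Prop := ∀ i, a i ≤ x i ∧ x i ≤ b i

/-- Membership in `[0,1]^k`. -/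
def box01 {k : ℕ} (x : Fin k → ℝ) : Prop := ∀ i, 0 ≤ x i ∧ x i ≤ 1

/-- `q_γ(x,y) = ∏_i |y_i - x_i|^{γ_i}`. -/
def qfun {k : ℕ} (γ x y : Fin k → ℝ) : ℝ := ∏ i, |y i - x i| ^ γ i

/-- `p_γ(x,y) = ∑_i |y_i - x_i|^{γ_i}`. -/
def pfun {k : ℕ} (γ x y : Fin k → ℝ) : ℝ := ∑ i, |y i - x i| ^ γ i

/-- Substitute the `i`-th coordinate of `x` by `z i`. -/
def substP {k : ℕ} (i : Fin k) (z x : Fin k → ℝ) : Fin k → ℝ := Function.update x i (z i)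

/-- The shuffle operator `ψ_i(z)`. -/
def psiOp {k : ℕ} (i : Fin k) (z : Fin k → ℝ) (F : (Fin k → ℝ) → (Fin k → ℝ) → ℝ) :
    (Fin k → ℝ) → (Fin k → ℝ) → ℝ :=
  fun x y => F x (substP i z y) + F (substP i z x) y

/-- The one-variable Chen operator `δ^{(i)}_z = I - ψ_i(z)`. -/
def deltaOne {k : ℕ} (i : Fin k) (z : Fin k → ℝ) (F : (Fin k → ℝ) → (Fin k → ℝ) → ℝ) :
    (Fin k → ℝ) → (Fin k → ℝ) → ℝ :=
  fun x y => F x y - F x (substP i z y) - F (substP i z x) y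

/-- The full Chen operator `δ^θ_z = ∏_{i=1}^k (I - ψ_i(z))` for `θ = {1,…,k}`. -/
def deltaFull {k : ℕ} (z : Fin k → ℝ) (F : (Fin k → ℝ) → (Fin k → ℝ) → ℝ) :
    (Fin k → ℝ) → (Fin k → ℝ) → ℝ :=
  (List.finRange k).foldr (fun i G => deltaOne i z G) F

/-- Set of ratios for the rectangular-increment Hölder seminorm on the box `[a,b]`. -/
def boxRatioSet {k : ℕ} (α : Fin k → ℝ) (f : (Fin k → ℝ) → ℝ) (a b : Fin k → ℝ) : Set ℝ :=
  {r | ∃ x y, inBox a b x ∧ inBox a b y ∧ (∀ i, x i ≠ y i) ∧ r = |boxInc f x y| / qfun α x y}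

/-- Rectangular-increment Hölder seminorm `‖f‖_{α,□,[a,b]}`. -/
def boxSemi {k : ℕ} (α : Fin k → ℝ) (f : (Fin k → ℝ) → ℝ) (a b : Fin k → ℝ) : ℝ :=
  sSup (boxRatioSet α f a b)

/-- Set of ratios for the directional Hölder seminorm in direction `i`. -/
def dirRatioSet {k : ℕ} (i : Fin k) (αi : ℝ) (f : (Fin k → ℝ) → ℝ) (a b : Fin k → ℝ) :
    Set ℝ :=
  {r | ∃ x, inBox a b x ∧ ∃ u v : ℝ, a i ≤ u ∧ u ≤ b i ∧ a i ≤ v ∧ v ≤ b i ∧ u ≠ v ∧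
    r = |f (Function.update x i v) - f (Function.update x i u)| / |v - u| ^ αi}

/-- Directional Hölder seminorm `sup_x ‖f_{x,i}‖_{α_i}`. -/
def dirSemi {k : ℕ} (i : Fin k) (αi : ℝ) (f : (Fin k → ℝ) → ℝ) (a b : Fin k → ℝ) : ℝ :=
  sSup (dirRatioSet i αi f a b)

/-- `‖f‖_{α,+,[a,b]} = ∑_i sup_x ‖f_{x,i}‖_{α_i}`. -/
def dirSum {k : ℕ} (α : Fin k → ℝ) (f : (Fin k → ℝ) → ℝ) (a b : Fin k → ℝ) : ℝ :=
  ∑ i, dirSemi i (α i) f a b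

/-- The multiparameter Hölder seminorm `‖f‖_{α,[a,b]}`. -/
def holderNorm {k : ℕ} (α : Fin k → ℝ) (f : (Fin k → ℝ) → ℝ) (a b : Fin k → ℝ) : ℝ :=
  boxSemi α f a b + dirSum α f a b

/-- Membership in the multiparameter Hölder space on `[a,b]` (finiteness of `‖f‖_{α,[a,b]}`). -/
def MemHolderField {k : ℕ} (α : Fin k → ℝ) (f : (Fin k → ℝ) → ℝ) (a b : Fin k → ℝ) : Prop :=
  ∃ C : ℝ, (∀ x y, inBox a b x → inBox a b y → |boxInc f x y| ≤ C * qfun α x y) ∧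
    (∀ (i : Fin k) x (u v : ℝ), inBox a b x → a i ≤ u → u ≤ b i → a i ≤ v → v ≤ b i →
      |f (Function.update x i v) - f (Function.update x i u)| ≤ C * |v - u| ^ (α i))

/-- Grid Riemann sum of `Ξ` over the grid-like partition `P`. -/
def gridSum {k : ℕ} (Ξ : (Fin k → ℝ) → (Fin k → ℝ) → ℝ) {n : Fin k → ℕ}
    (P : ∀ i, Fin (n i + 1) → ℝ) : ℝ :=
  ∑ c : (∀ i, Fin (n i)), Ξ (fun i => P i (c i).castSucc) (fun i => P i (c i).succ)

/-- `P` is a grid-like partition of the box `[x,y]`. -/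
def IsPartition {k : ℕ} (x y : Fin k → ℝ) {n : Fin k → ℕ}
    (P : ∀ i, Fin (n i + 1) → ℝ) : Prop :=
  ∀ i, Monotone (P i) ∧ P i 0 = x i ∧ P i (Fin.last (n i)) = y i

/-- The mesh of the partition `P` is smaller than `δ`. -/
def MeshLt {k : ℕ} {n : Fin k → ℕ} (P : ∀ i, Fin (n i + 1) → ℝ) (δ : ℝ) : Prop :=
  ∀ i (j : Fin (n i)), P i j.succ - P i j.castSucc < δ

/-- `I` is the limit of the grid Riemann sums of `Ξ` over `[x,y]` as the mesh tends to `0`. -/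
def IsGridLimit {k : ℕ} (Ξ : (Fin k → ℝ) → (Fin k → ℝ) → ℝ) (x y : Fin k → ℝ) (I : ℝ) :
    Prop :=
  ∀ ε > (0:ℝ), ∃ δ > (0:ℝ), ∀ (n : Fin k → ℕ) (P : ∀ i, Fin (n i + 1) → ℝ),
    IsPartition x y P → MeshLt P δ → |gridSum Ξ P - I| ≤ ε

end

noncomputable section

/-- Partial derivative of `g` in coordinate `i`. -/
def pd {k : ℕ} (i : Fin k) (g : (Fin k → ℝ) → ℝ) : (Fin k → ℝ) → ℝ :=
  fun x => deriv (fun t => g (Function.update x i t)) (x i)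

/-- Iterated partial derivatives of `f` along the list of coordinates `l`. -/
def mixedAlong {k : ℕ} (l : List (Fin k)) (f : (Fin k → ℝ) → ℝ) : (Fin k → ℝ) → ℝ :=
  l.foldr pd f

/-- The mixed partial derivative `∂^k f / ∂x_1 ⋯ ∂x_k`. -/
def mixedDeriv {k : ℕ} (f : (Fin k → ℝ) → ℝ) : (Fin k → ℝ) → ℝ :=
  mixedAlong (List.finRange k) f

/-- The iterated integral `∫_{x_1}^{y_1} ⋯ ∫_{x_k}^{y_k} g(z) dz_k ⋯ dz_1`. -/
def iterInt : {k : ℕ} → ((Fin k → ℝ) → ℝ) → (Fin k → ℝ) → (Fin k → ℝ) → ℝ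
  | 0, g, _, _ => g (fun i => i.elim0)
  | _ + 1, g, x, y =>
      ∫ t in (x 0)..(y 0),
        iterInt (fun z => g (Fin.cons t z)) (fun i => x i.succ) (fun i => y i.succ)

end

/-!
Write `Δ_s g` (`boxIncOn s g`) for the increment of `g` in the coordinates of `s` only. For
`i ∉ s`, `Δ_{s ∪ {i}} g (x, y)` is the difference of `t ↦ Δ_s g (x, y[i ↦ t])` between `y i` and
`x i`, and this function has derivative `Δ_s (∂_i g)`, because the corners over which `Δ_s` sums
all share the `i`-th coordinate `t`. The one-variable mean value theorem therefore turns
`Δ_{s ∪ {i}} g (x, y)` into `Δ_s (∂_i g) (x, y[i ↦ ξ]) ⬝ (y i - x i)`; peeling the coordinates off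
one at a time yields the mixed derivative at a point of the box times its volume.
-/

open Function Finset

noncomputable section

variable {k : ℕ}

def boxIncOn (s : Finset (Fin k)) (g : (Fin k → ℝ) → ℝ) (x y : Fin k → ℝ) : ℝ :=
  ∑ S ∈ s.powerset, (-1 : ℝ) ^ S.card * g (corner x y S)

lemma boxInc_eq_boxIncOn_univ (g : (Fin k → ℝ) → ℝ) (x y : Fin k → ℝ) :
    boxInc g x y = boxIncOn univ g x y := by
  simp [boxInc, boxIncOn, powerset_univ]

lemma corner_empty (x y : Fin k → ℝ) : corner x y ∅ = y := by
  funext j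
  simp [corner]

lemma corner_update {x y : Fin k → ℝ} {i : Fin k} {S : Finset (Fin k)} (hi : i ∉ S) (t : ℝ) :
    corner x (update y i t) S = update (corner x y S) i t := by
  funext j
  rcases eq_or_ne j i with rfl | hj
  · simp [corner, hi]
  · simp [corner, update_of_ne hj]

lemma corner_insert {x y : Fin k → ℝ} {i : Fin k} {S : Finset (Fin k)} (hi : i ∉ S) :
    corner x y (insert i S) = update (corner x y S) i (x i) := by
  funext j
  rcases eq_or_ne j i with rfl | hj
  · simp [corner]
  · simp [corner, hj]

lemma boxIncOn_update {s : Finset (Fin k)} {i : Fin k} (hi : i ∉ s) (g : (Fin k → ℝ) → ℝ)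
    (x y : Fin k → ℝ) (t : ℝ) :
    boxIncOn s g x (update y i t) =
      ∑ S ∈ s.powerset, (-1 : ℝ) ^ S.card * g (update (corner x y S) i t) :=
  sum_congr rfl fun S hS => by
    rw [corner_update (fun h => hi (mem_powerset.mp hS h))]

lemma boxIncOn_insert {s : Finset (Fin k)} {i : Fin k} (hi : i ∉ s) (g : (Fin k → ℝ) → ℝ)
    (x y : Fin k → ℝ) :
    boxIncOn (insert i s) g x y = boxIncOn s g x y - boxIncOn s g x (update y i (x i)) := by
  rw [boxIncOn_update hi, boxIncOn, sum_powerset_insert hi, boxIncOn, sub_eq_add_neg,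
    ← sum_neg_distrib]
  congr 1
  refine sum_congr rfl fun S hS => ?_
  have hiS : i ∉ S := fun h => hi (mem_powerset.mp hS h)
  rw [corner_insert hiS, card_insert_of_notMem hiS, pow_succ]
  ring

lemma hasDerivAt_pd {g : (Fin k → ℝ) → ℝ} {i : Fin k}
    (hg : ∀ w, DifferentiableAt ℝ (fun t => g (update w i t)) (w i)) (w : Fin k → ℝ) (t : ℝ) :
    HasDerivAt (fun u => g (update w i u)) (pd i g (update w i t)) t := by
  have h := hg (update w i t)
  simp only [update_idem, update_self] at h
  simpa only [pd, update_idem, update_self] using h.hasDerivAt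

lemma hasDerivAt_boxIncOn_update {s : Finset (Fin k)} {i : Fin k} (hi : i ∉ s)
    {g : (Fin k → ℝ) → ℝ} (hg : ∀ w, DifferentiableAt ℝ (fun t => g (update w i t)) (w i))
    (x y : Fin k → ℝ) (t : ℝ) :
    HasDerivAt (fun u => boxIncOn s g x (update y i u)) (boxIncOn s (pd i g) x (update y i t))
      t := by
  simp only [boxIncOn_update hi]
  exact HasDerivAt.fun_sum fun S _ => (hasDerivAt_pd hg _ t).const_mul _

lemma exists_mem_Icc_sub_eq_mul {φ φ' : ℝ → ℝ} (hφ : ∀ t, HasDerivAt φ (φ' t) t) {a b : ℝ}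
    (hab : a ≤ b) : ∃ ξ ∈ Set.Icc a b, φ b - φ a = φ' ξ * (b - a) := by
  rcases hab.eq_or_lt with rfl | hlt
  · exact ⟨a, Set.left_mem_Icc.mpr le_rfl, by simp⟩
  obtain ⟨ξ, hξ, h⟩ := exists_hasDerivAt_eq_slope φ φ' hlt
    (fun t _ => (hφ t).continuousAt.continuousWithinAt) fun t _ => hφ t
  exact ⟨ξ, Set.Ioo_subset_Icc_self hξ, by rw [h, div_mul_cancel₀ _ (sub_ne_zero.mpr hlt.ne')]⟩

lemma exists_boxIncOn_insert_eq_mul {s : Finset (Fin k)} {i : Fin k} (hi : i ∉ s)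
    {g : (Fin k → ℝ) → ℝ} (hg : ∀ w, DifferentiableAt ℝ (fun t => g (update w i t)) (w i))
    {x y : Fin k → ℝ} (hxy : x i ≤ y i) :
    ∃ ξ ∈ Set.Icc (x i) (y i),
      boxIncOn (insert i s) g x y = boxIncOn s (pd i g) x (update y i ξ) * (y i - x i) := by
  obtain ⟨ξ, hξ, h⟩ := exists_mem_Icc_sub_eq_mul (hasDerivAt_boxIncOn_update hi hg x y) hxy
  refine ⟨ξ, hξ, ?_⟩
  rw [boxIncOn_insert hi, ← h, update_eq_self]

lemma mixedAlong_append_singleton (l : List (Fin k)) (i : Fin k) (g : (Fin k → ℝ) → ℝ) :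
    mixedAlong (l ++ [i]) g = mixedAlong l (pd i g) := by
  simp [mixedAlong, List.foldr_append]

lemma inBox_mono_right {x y y' c : Fin k → ℝ} (hy : ∀ j, y' j ≤ y j) (hc : inBox x y' c) :
    inBox x y c :=
  fun j => ⟨(hc j).1, (hc j).2.trans (hy j)⟩

theorem exists_boxIncOn_eq_mixedAlong_mul (l : List (Fin k)) (hl : l.Nodup)
    (g : (Fin k → ℝ) → ℝ)
    (hd : ∀ m, m <:+ l → ∀ (i : Fin k) (w : Fin k → ℝ),
      DifferentiableAt ℝ (fun t => mixedAlong m g (update w i t)) (w i))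
    {x y : Fin k → ℝ} (hxy : ∀ j, x j ≤ y j) :
    ∃ c, inBox x y c ∧
      boxIncOn l.toFinset g x y = mixedAlong l g c * ∏ j ∈ l.toFinset, (y j - x j) := by
  induction l using List.reverseRecOn generalizing g y with
  | nil => exact ⟨y, fun j => ⟨hxy j, le_rfl⟩, by simp [boxIncOn, corner_empty, mixedAlong]⟩
  | append_singleton l i ih =>
    have hi : i ∉ l.toFinset := by
      simpa using (List.nodup_append.mp hl).2.2 i
    have hinsert : (l ++ [i]).toFinset = insert i l.toFinset := by
      ext; simp
    obtain ⟨ξ, hξ, hstep⟩ :=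
      exists_boxIncOn_insert_eq_mul (g := g) hi (hd [] List.nil_suffix i) (hxy i)
    have hy' : ∀ j, update y i ξ j ≤ y j := by
      intro j; rcases eq_or_ne j i with rfl | hj <;> simp [*, hξ.2]
    have hxy' : ∀ j, x j ≤ update y i ξ j := by
      intro j; rcases eq_or_ne j i with rfl | hj <;> simp [*, hξ.1]
    have hd' : ∀ m, m <:+ l → ∀ (j : Fin k) (w : Fin k → ℝ),
        DifferentiableAt ℝ (fun t => mixedAlong m (pd i g) (update w j t)) (w j) := by
      intro m hm
      simpa only [mixedAlong_append_singleton] using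
        hd (m ++ [i]) (List.suffix_append_self_iff.mpr hm)
    obtain ⟨c, hc, hIH⟩ := ih hl.of_append_left (pd i g) hd' hxy'
    have hprod : ∏ j ∈ l.toFinset, (update y i ξ j - x j) = ∏ j ∈ l.toFinset, (y j - x j) :=
      prod_congr rfl fun j hj => by rw [update_of_ne (ne_of_mem_of_not_mem hj hi)]
    refine ⟨c, inBox_mono_right hy' hc, ?_⟩
    rw [hinsert, hstep, hIH, hprod, prod_insert hi, mixedAlong_append_singleton]
    ring

end

theorem boxInc_mean_value_general {k : ℕ} (f : (Fin k → ℝ) → ℝ)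
    (hd : ∀ l : List (Fin k), l.Sublist (List.finRange k) →
      ∀ (i : Fin k) (w : Fin k → ℝ),
        DifferentiableAt ℝ (fun t => mixedAlong l f (Function.update w i t)) (w i)) :
    ∀ x y : Fin k → ℝ, box01 x → box01 y → (∀ i, x i ≤ y i) →
      ∃ c : Fin k → ℝ, inBox x y c ∧
        boxInc f x y = mixedDeriv f c * ∏ i, (y i - x i) := by
  intro x y _ _ hxy
  obtain ⟨c, hc, h⟩ := exists_boxIncOn_eq_mixedAlong_mul (List.finRange k)
    (List.nodup_finRange k) f (fun m hm => hd m hm.sublist) hxy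
  rw [List.toFinset_finRange] at h
  exact ⟨c, hc, by rw [boxInc_eq_boxIncOn_univ, h, mixedDeriv]⟩

/-- Mean value theorem for rectangular increments: if `f` has a continuous mixed partial
derivative `Df`, then for every box `[x,y]` there is `c ∈ [x,y]` with
`□^k_{x,y} f = Df(c) ⬝ ∏_i (y_i - x_i)`. -/
theorem boxInc_mean_value {k : ℕ} (f : (Fin k → ℝ) → ℝ)
    (hd : ∀ l : List (Fin k), l.Sublist (List.finRange k) →
      ∀ (i : Fin k) (w : Fin k → ℝ),
        DifferentiableAt ℝ (fun t => mixedAlong l f (Function.update w i t)) (w i))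
    (hc : Continuous (mixedDeriv f)) :
    ∀ x y : Fin k → ℝ, box01 x → box01 y → (∀ i, x i ≤ y i) →
      ∃ c : Fin k → ℝ, inBox x y c ∧
        boxInc f x y = mixedDeriv f c * ∏ i, (y i - x i) :=
  boxInc_mean_value_general f hd
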